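/- Let X be a metrizable, locally compact and locally connected topological space and let G be a countable group acting by homeomorphisms on X such that the orbit space X/G is Hausdorff. Then there exists a G-invariant metric on X inducing the topology of X. -/

import Mathlib

/-!
Orbits are closed, since the orbit space is Hausdorff, and discrete, by Baire's theorem applied
to a countable orbit. With local compactness and local connectedness this gives an
equicontinuity property: if `x k → a` and `g k • x k → u`, then `g k • y k → u` for every
`y k → a`. For a bump `θ` with compact support and `|θ| ≤ 1`, the pseudometric
`min (dist a b + |θ a - θ b|) (|θ a| + |θ b|)` is bounded by `2` and vanishes off the support of
`θ`; its supremum over `G` is an invariant pseudometric, which equicontinuity and compactness of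
the support make continuous on the diagonal. Each sector (the `G`-saturation of a connected
component) is open and, by paracompactness, σ-compact, so countably many bumps cover it; a
geometric series of the corresponding pseudometrics is an invariant metric on the sector inducing
its topology, and distinct sectors are put at distance `2`.
-/

open Filter Topology Metric Set Pointwise MulAction

theorem exists_isClopen_isSigmaCompact_mem {X : Type*} [TopologicalSpace X]
    [WeaklyLocallyCompactSpace X] [ParacompactSpace X] (x₀ : X) :
    ∃ s : Set X, IsClopen s ∧ IsSigmaCompact s ∧ x₀ ∈ s := by
  choose K hKc hKn using WeaklyLocallyCompactSpace.exists_compact_mem_nhds (X := X)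
  obtain ⟨U, hUo, hUcov, hUlf, hUK⟩ := precise_refinement (fun x => interior (K x))
    (fun _ => isOpen_interior)
    (iUnion_eq_univ_iff.2 fun x => ⟨x, mem_interior_iff_mem_nhds.2 (hKn x)⟩)
  let C : ℕ → Set X := fun n => Nat.rec {x₀} (fun _ c => ⋃ i ∈ {i | (U i ∩ c).Nonempty}, K i) n
  have hC : ∀ n, IsCompact (C n) := by
    intro n
    induction n with
    | zero => exact isCompact_singleton
    | succ n ih => exact (hUlf.finite_nonempty_inter_compact ih).isCompact_biUnion fun i _ => hKc i
  have hUC : ∀ n i, (U i ∩ C n).Nonempty → U i ⊆ ⋃ n, C n := fun n i hi =>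
    (hUK i).trans <| interior_subset.trans <| (subset_biUnion_of_mem (u := K) hi).trans <|
      subset_iUnion C (n + 1)
  have hcov : ∀ y, ∃ i, y ∈ U i := fun y => mem_iUnion.1 (hUcov.symm ▸ mem_univ y)
  refine ⟨⋃ n, C n, ⟨?_, ?_⟩, isSigmaCompact_iUnion_of_isCompact C hC, mem_iUnion.2 ⟨0, rfl⟩⟩
  · refine closure_subset_iff_isClosed.1 fun y hy => ?_
    obtain ⟨i, hi⟩ := hcov y
    obtain ⟨z, hzU, hz⟩ := mem_closure_iff.1 hy (U i) (hUo i) hi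
    obtain ⟨n, hn⟩ := mem_iUnion.1 hz
    exact hUC n i ⟨z, hzU, hn⟩ hi
  · refine isOpen_iff_forall_mem_open.2 fun y hy => ?_
    obtain ⟨n, hn⟩ := mem_iUnion.1 hy
    obtain ⟨i, hi⟩ := hcov y
    exact ⟨U i, hUC n i ⟨y, hi, hn⟩, hUo i, hi⟩

theorem isSigmaCompact_connectedComponent {X : Type*} [TopologicalSpace X]
    [WeaklyLocallyCompactSpace X] [ParacompactSpace X] (x : X) :
    IsSigmaCompact (connectedComponent x) := by
  obtain ⟨s, hs, hsσ, hx⟩ := exists_isClopen_isSigmaCompact_mem x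
  exact hsσ.of_isClosed_subset isClosed_connectedComponent (hs.connectedComponent_subset hx)

section Sector

variable (G : Type*) {X : Type*} [Group G] [TopologicalSpace X] [MulAction G X]

def sector (a : X) : Set X := ⋃ g : G, g • connectedComponent a

variable {G}

theorem mem_sector_iff {a b : X} : b ∈ sector G a ↔ ∃ g : G, g • b ∈ connectedComponent a := by
  simp only [sector, mem_iUnion, mem_smul_set_iff_inv_smul_mem]
  exact ⟨fun ⟨g, h⟩ => ⟨g⁻¹, h⟩, fun ⟨g, h⟩ => ⟨g⁻¹, by rwa [inv_inv]⟩⟩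

theorem mem_sector_self (a : X) : a ∈ sector G a :=
  mem_sector_iff.2 ⟨1, by rw [one_smul]; exact mem_connectedComponent⟩

variable [ContinuousConstSMul G X]

theorem connectedComponent_smul (g : G) (a : X) :
    connectedComponent (g • a) = g • connectedComponent a := by
  simpa [connectedComponentIn_univ, ← image_smul, (MulAction.surjective g).range_eq] using
    ((Homeomorph.smul g).image_connectedComponentIn (mem_univ a)).symm

theorem sector_smul (g : G) (a : X) : sector G (g • a) = sector G a := by
  ext b
  simp only [mem_sector_iff, connectedComponent_smul, mem_smul_set_iff_inv_smul_mem, smul_smul]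
  exact ⟨fun ⟨h, hh⟩ => ⟨g⁻¹ * h, hh⟩, fun ⟨h, hh⟩ => ⟨g * h, by rwa [inv_mul_cancel_left]⟩⟩

theorem sector_eq_of_mem {a b : X} (h : b ∈ sector G a) : sector G b = sector G a := by
  obtain ⟨g, hg⟩ := mem_sector_iff.1 h
  rw [← sector_smul g b]
  simp only [sector, connectedComponent_eq hg]

theorem eventually_sector_eq [LocallyConnectedSpace X] (a : X) :
    ∀ᶠ b in 𝓝 a, sector G b = sector G a := by
  have hopen : IsOpen (sector G a) := isOpen_iUnion fun g => isOpen_connectedComponent.smul g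
  filter_upwards [hopen.mem_nhds (mem_sector_self a)] with b hb using sector_eq_of_mem hb

theorem isSigmaCompact_sector [Countable G] [WeaklyLocallyCompactSpace X] [ParacompactSpace X]
    (a : X) : IsSigmaCompact (sector G a) :=
  isSigmaCompact_iUnion _ fun g => (isSigmaCompact_connectedComponent a).image
    (continuous_const_smul g)

end Sector

section Orbit

variable {G X : Type*} [Group G] [TopologicalSpace X] [MulAction G X]
  [T2Space (Quotient (orbitRel G X))]

theorem mem_orbit_of_tendsto {ι : Type*} {l : Filter ι} [l.NeBot] {g : ι → G} {x : ι → X}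
    {a u : X} (hx : Tendsto x l (𝓝 a)) (hgx : Tendsto (fun i => g i • x i) l (𝓝 u)) :
    u ∈ orbit G a := by
  let π : X → Quotient (orbitRel G X) := Quotient.mk _
  have hπ : Continuous π := continuous_quot_mk
  have hπgx : (fun i => π (g i • x i)) = fun i => π (x i) :=
    funext fun i => Quotient.sound (mem_orbit (x i) (g i))
  have hu : Tendsto (fun i => π (x i)) l (𝓝 (π u)) := hπgx ▸ (hπ.tendsto u).comp hgx
  exact Quotient.exact (tendsto_nhds_unique hu ((hπ.tendsto a).comp hx))

theorem isClosed_orbit (a : X) : IsClosed (orbit G a) := by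
  let π : X → Quotient (orbitRel G X) := Quotient.mk _
  have : orbit G a = π ⁻¹' {π a} := by
    ext b
    exact (Quotient.eq (r := orbitRel G X)).symm
  have hπ : Continuous π := continuous_quot_mk
  rw [this]
  exact (isClosed_singleton (X := Quotient (orbitRel G X))).preimage hπ

variable [Countable G] [ContinuousConstSMul G X] [T2Space X] [LocallyCompactSpace X]

theorem eventually_eq_of_mem_orbit (a : X) : ∀ᶠ y in 𝓝 a, y ∈ orbit G a → y = a := by
  set A := orbit G a
  have : Countable A := (countable_range fun g : G => g • a).to_subtype
  have : Nonempty A := ⟨⟨a, mem_orbit_self a⟩⟩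
  have : LocallyCompactSpace A :=
    (isClosed_orbit a).isClosedEmbedding_subtypeVal.locallyCompactSpace
  -- Baire category: the countable locally compact space `A` has an isolated point `z`.
  obtain ⟨z, hz⟩ := nonempty_interior_of_iUnion_of_closed (fun z : A => isClosed_singleton)
    (iUnion_of_singleton A)
  have hzA : {z} ∈ 𝓝 z :=
    (hz.subset_singleton_iff.1 interior_subset ▸ isOpen_interior).mem_nhds rfl
  obtain ⟨U, hU, hUz⟩ := (mem_nhds_subtype A z {z}).1 hzA
  obtain ⟨h, hha⟩ : ∃ h : G, h • a = z := mem_orbit_iff.1 z.2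
  rw [← hha] at hU
  filter_upwards [(continuous_const_smul h).tendsto a hU] with y hy hyA
  have hyA' : h • y ∈ orbit G a := orbit_eq_iff.2 hyA ▸ mem_orbit y h
  have hmem : (⟨h • y, hyA'⟩ : A) ∈ Subtype.val ⁻¹' U := hy
  rw [← smul_left_cancel_iff h, hha]
  exact congrArg Subtype.val (hUz hmem)

end Orbit

section Equicontinuity

variable {G X : Type*} [Group G] [MetricSpace X] [MulAction G X] [ContinuousConstSMul G X]

theorem exists_seq_dist_smul_eq [LocallyConnectedSpace X] {g : ℕ → G} {x y : ℕ → X} {a u : X}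
    {r : ℝ} (hr : 0 < r)
    (hx : Tendsto x atTop (𝓝 a)) (hy : Tendsto y atTop (𝓝 a))
    (hgx : Tendsto (fun k => g k • x k) atTop (𝓝 u))
    (hgy : ∃ᶠ k in atTop, r ≤ dist (g k • y k) u) :
    ∃ (k : ℕ → ℕ) (z : ℕ → X), Tendsto z atTop (𝓝 a) ∧ ∀ m, dist (g (k m) • z m) u = r / 2 := by
  have : ∀ m : ℕ, ∃ k, ∃ z ∈ ball a (1 / (m + 1)), dist (g k • z) u = r / 2 := by
    intro m
    have hW := connectedComponentIn_mem_nhds (ball_mem_nhds a (Nat.one_div_pos_of_nat (n := m)))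
    obtain ⟨k, hk, hxk, hyk, hgxk⟩ := (hgy.and_eventually
      ((hx.eventually_mem hW).and ((hy.eventually_mem hW).and
        (hgx.eventually_mem (ball_mem_nhds u (half_pos hr)))))).exists
    obtain ⟨z, hzW, hz⟩ := isPreconnected_connectedComponentIn.intermediate_value hxk hyk
      (((continuous_const_smul (g k)).dist continuous_const).continuousOn)
      ⟨(mem_ball.1 hgxk).le, by linarith⟩
    exact ⟨k, z, connectedComponentIn_subset _ _ hzW, hz⟩
  choose k z hz hzu using this
  refine ⟨k, z, tendsto_iff_dist_tendsto_zero.2 ?_, hzu⟩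
  exact squeeze_zero (fun _ => dist_nonneg) (fun m => (mem_ball.1 (hz m)).le)
    tendsto_one_div_add_atTop_nhds_zero_nat

variable [T2Space (Quotient (orbitRel G X))] [Countable G] [LocallyCompactSpace X]

theorem exists_isCompact_closedBall_orbit (u : X) :
    ∃ r > 0, IsCompact (closedBall u r) ∧ ∀ w ∈ orbit G u, dist w u ≤ r → w = u := by
  obtain ⟨δ, hδ, hball⟩ := Metric.eventually_nhds_iff.1 (eventually_eq_of_mem_orbit (G := G) u)
  obtain ⟨r, ⟨hr, hcpt⟩, hrpos⟩ := ((eventually_lt_nhds hδ).and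
    (eventually_isCompact_closedBall u) |>.filter_mono nhdsWithin_le_nhds |>.and
    (self_mem_nhdsWithin (s := Ioi 0))).exists
  exact ⟨r, hrpos, hcpt, fun w hw hwr => hball (hwr.trans_lt hr) hw⟩

theorem tendsto_smul_of_tendsto_smul [LocallyConnectedSpace X] {g : ℕ → G} {x y : ℕ → X} {a u : X}
    (hx : Tendsto x atTop (𝓝 a)) (hy : Tendsto y atTop (𝓝 a))
    (hgx : Tendsto (fun k => g k • x k) atTop (𝓝 u)) :
    Tendsto (fun k => g k • y k) atTop (𝓝 u) := by
  obtain ⟨r₀, hr₀, hcpt, hdisc⟩ := exists_isCompact_closedBall_orbit (G := G) u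
  have horbit : orbit G a = orbit G u := (orbit_eq_iff.2 (mem_orbit_of_tendsto hx hgx)).symm
  refine Metric.tendsto_nhds.2 fun ε hε => ?_
  set r := min ε r₀
  have hr : 0 < r := lt_min hε hr₀
  suffices ∀ᶠ k in atTop, dist (g k • y k) u < r by
    filter_upwards [this] with k hk using hk.trans_le (min_le_left _ _)
  by_contra hfreq
  obtain ⟨k, z, hz, hzu⟩ := exists_seq_dist_smul_eq hr hx hy hgx
    ((not_eventually.1 hfreq).mono fun _ => le_of_not_gt)
  obtain ⟨w, -, φ, hφ, hw⟩ := hcpt.tendsto_subseq (x := fun m => g (k m) • z m)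
    fun m => mem_closedBall.2 ((hzu m).trans_le (by linarith [min_le_right ε r₀]))
  have hwu : dist w u = r / 2 :=
    tendsto_nhds_unique (hw.dist tendsto_const_nhds) (by simp [hzu])
  have hw_orbit : w ∈ orbit G u := horbit ▸ mem_orbit_of_tendsto (hz.comp hφ.tendsto_atTop) hw
  have := hdisc w hw_orbit (by linarith [min_le_right ε r₀])
  rw [this, dist_self] at hwu
  linarith

end Equicontinuity

structure IsBump {X : Type*} [TopologicalSpace X] (θ : X → ℝ) : Prop where
  continuous : Continuous θ
  hasCompactSupport : HasCompactSupport θ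
  abs_le_one : ∀ x, |θ x| ≤ 1

section Bump

variable {X : Type*} [TopologicalSpace X]

theorem isBump_zero : IsBump (0 : X → ℝ) :=
  ⟨continuous_const, HasCompactSupport.zero, fun _ => by simp⟩

variable [T2Space X] [LocallyCompactSpace X]

theorem exists_isBump_eq_one (x : X) : ∃ θ : X → ℝ, IsBump θ ∧ θ x = 1 := by
  obtain ⟨f, hfx, -, hf, hf01⟩ := exists_continuous_one_zero_of_isCompact isCompact_singleton
    isClosed_empty (disjoint_empty {x})
  exact ⟨f, ⟨f.continuous, hf, fun y => abs_le.2 ⟨by linarith [(hf01 y).1], (hf01 y).2⟩⟩,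
    hfx rfl⟩

theorem IsSigmaCompact.exists_isBump_family {t : Set X} (ht : IsSigmaCompact t) :
    ∃ θ : ℕ → X → ℝ, (∀ n, IsBump (θ n)) ∧ ∀ x ∈ t, ∃ n, θ n x ≠ 0 := by
  choose f hf hfx using exists_isBump_eq_one (X := X)
  obtain ⟨c, hc, -, htc⟩ := ht.isLindelof.elim_nhds_subcover (fun x => {y | f x y ≠ 0})
    fun x _ => (isOpen_ne_fun (hf x).continuous continuous_const).mem_nhds (by simp [hfx])
  have : Countable c := hc.to_subtype
  obtain ⟨e, he⟩ := exists_surjective_nat (Option c)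
  refine ⟨fun n => (e n).elim 0 fun x => f x, fun n => ?_, fun y hy => ?_⟩
  · change IsBump ((e n).elim 0 fun x => f x)
    cases e n with
    | none => exact isBump_zero
    | some x => exact hf x
  · obtain ⟨x, hxc, hyx⟩ := mem_iUnion₂.1 (htc hy)
    obtain ⟨n, hn⟩ := he (some ⟨x, hxc⟩)
    exact ⟨n, by simpa [hn] using hyx⟩

theorem exists_isBump_families :
    ∃ θ : Set X → ℕ → X → ℝ, (∀ t n, IsBump (θ t n)) ∧
      ∀ t, IsSigmaCompact t → ∀ x ∈ t, ∃ n, θ t n x ≠ 0 := by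
  have : ∀ t : Set X, ∃ θ : ℕ → X → ℝ, (∀ n, IsBump (θ n)) ∧
      (IsSigmaCompact t → ∀ x ∈ t, ∃ n, θ n x ≠ 0) := by
    intro t
    by_cases ht : IsSigmaCompact t
    · obtain ⟨θ, hθ, hcov⟩ := ht.exists_isBump_family
      exact ⟨θ, hθ, fun _ => hcov⟩
    · exact ⟨0, fun _ => isBump_zero, fun h => absurd h ht⟩
  choose θ hθ hcov using this
  exact ⟨θ, hθ, hcov⟩

end Bump

section CutoffDist

variable {X : Type*} [PseudoMetricSpace X]

def cutoffDist (θ : X → ℝ) : PseudoMetric X ℝ where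
  toFun a b := min (dist a b + |θ a - θ b|) (|θ a| + |θ b|)
  refl' a := by simp
  symm' a b := by rw [dist_comm, abs_sub_comm, add_comm |θ a|]
  triangle' a b c := by
    have h₁ := dist_triangle a b c
    have h₂ := abs_sub_le (θ a) (θ b) (θ c)
    have h₃ := abs_sub_abs_le_abs_sub (θ a) (θ b)
    have h₄ := abs_sub_abs_le_abs_sub (θ c) (θ b)
    rw [abs_sub_comm (θ c)] at h₄
    have h₅ := abs_nonneg (θ b)
    have h₆ := dist_nonneg (x := a) (y := b)
    have h₇ := dist_nonneg (x := b) (y := c)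
    rcases le_total (dist a b + |θ a - θ b|) (|θ a| + |θ b|) with hab | hab <;>
    rcases le_total (dist b c + |θ b - θ c|) (|θ b| + |θ c|) with hbc | hbc <;>
    simp only [min_eq_left, min_eq_right, hab, hbc] <;>
    first
    | exact min_le_of_left_le (by linarith)
    | exact min_le_of_right_le (by linarith)

theorem min_dist_abs_le_cutoffDist (θ : X → ℝ) (a b : X) :
    min (dist a b) |θ a| ≤ cutoffDist θ a b :=
  le_min ((min_le_left _ _).trans (le_add_of_nonneg_right (abs_nonneg _)))
    ((min_le_right _ _).trans (le_add_of_nonneg_right (abs_nonneg _)))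

theorem cutoffDist_le_dist_add (θ : X → ℝ) (a b : X) :
    cutoffDist θ a b ≤ dist a b + |θ a - θ b| :=
  min_le_left _ _

theorem cutoffDist_le_abs_add_abs (θ : X → ℝ) (a b : X) :
    cutoffDist θ a b ≤ |θ a| + |θ b| :=
  min_le_right _ _

theorem tendsto_cutoffDist {θ : X → ℝ} (hθ : Continuous θ) {ι : Type*} {l : Filter ι}
    {p q : ι → X} {w : X} (hp : Tendsto p l (𝓝 w)) (hq : Tendsto q l (𝓝 w)) :
    Tendsto (fun i => cutoffDist θ (p i) (q i)) l (𝓝 0) := by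
  have hbound : Tendsto (fun i => dist (p i) (q i) + |θ (p i) - θ (q i)|) l (𝓝 0) := by
    simpa using (hp.dist hq).add (((hθ.tendsto w).comp hp).sub ((hθ.tendsto w).comp hq)).abs
  exact squeeze_zero (fun _ => (cutoffDist θ).nonneg _ _)
    (fun _ => cutoffDist_le_dist_add θ _ _) hbound

end CutoffDist

noncomputable section

namespace PseudoMetric

variable {X : Type*}

section SmulSup

variable (G : Type*) [Group G] [MulAction G X]

theorem bddAbove_range_smul {d : PseudoMetric X ℝ} {C : ℝ} (hC : ∀ a b, d a b ≤ C) (a b : X) :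
    BddAbove (range fun g : G => d (g • a) (g • b)) :=
  ⟨C, forall_mem_range.2 fun _ => hC _ _⟩

def smulSup (d : PseudoMetric X ℝ) {C : ℝ} (hC : ∀ a b, d a b ≤ C) : PseudoMetric X ℝ where
  toFun a b := ⨆ g : G, d (g • a) (g • b)
  refl' a := by simp
  symm' a b := by simp only [d.symm]
  triangle' a b c := ciSup_le fun g => (d.triangle _ (g • b) _).trans <|
    add_le_add (le_ciSup (bddAbove_range_smul G hC a b) g)
      (le_ciSup (bddAbove_range_smul G hC b c) g)

variable {G} {d : PseudoMetric X ℝ} {C : ℝ} (hC : ∀ a b, d a b ≤ C)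
include hC

theorem smulSup_apply (a b : X) : smulSup G d hC a b = ⨆ g : G, d (g • a) (g • b) := rfl

theorem le_smulSup (a b : X) : d a b ≤ smulSup G d hC a b := by
  rw [smulSup_apply]
  simpa using le_ciSup (bddAbove_range_smul G hC a b) 1

theorem smulSup_le (a b : X) : smulSup G d hC a b ≤ C :=
  ciSup_le fun _ => hC _ _

theorem exists_lt_of_lt_smulSup {ε : ℝ} {a b : X} (h : ε < smulSup G d hC a b) :
    ∃ g : G, ε < d (g • a) (g • b) :=
  exists_lt_of_lt_ciSup h

theorem smulSup_smul (g : G) (a b : X) : smulSup G d hC (g • a) (g • b) = smulSup G d hC a b := by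
  change ⨆ h : G, d (h • g • a) (h • g • b) = ⨆ h : G, d (h • a) (h • b)
  simp_rw [smul_smul]
  exact (Equiv.mulRight g).iSup_comp (g := fun h => d (h • a) (h • b))

end SmulSup

section GeomSum

theorem summable_geomSum_term (d : ℕ → PseudoMetric X ℝ) {C : ℝ} (hC : ∀ n a b, d n a b ≤ C)
    (a b : X) : Summable fun n => (1 / 2 : ℝ) ^ n * d n a b :=
  (summable_geometric_two.mul_right C).of_nonneg_of_le
    (fun n => mul_nonneg (by positivity) ((d n).nonneg a b))
    (fun n => mul_le_mul_of_nonneg_left (hC n a b) (by positivity))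

def geomSum (d : ℕ → PseudoMetric X ℝ) {C : ℝ} (hC : ∀ n a b, d n a b ≤ C) :
    PseudoMetric X ℝ where
  toFun a b := ∑' n, (1 / 2 : ℝ) ^ n * d n a b
  refl' a := by simp
  symm' a b := by simp only [(d _).symm a b]
  triangle' a b c := by
    rw [← (summable_geomSum_term d hC a b).tsum_add (summable_geomSum_term d hC b c)]
    refine (summable_geomSum_term d hC a c).tsum_le_tsum (fun n => ?_)
      ((summable_geomSum_term d hC a b).add (summable_geomSum_term d hC b c))
    rw [← mul_add]
    exact mul_le_mul_of_nonneg_left ((d n).triangle a b c) (by positivity)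

variable {d : ℕ → PseudoMetric X ℝ} {C : ℝ} (hC : ∀ n a b, d n a b ≤ C)
include hC

theorem geomSum_apply (a b : X) : geomSum d hC a b = ∑' n, (1 / 2 : ℝ) ^ n * d n a b := rfl

theorem pow_mul_le_geomSum (n : ℕ) (a b : X) : (1 / 2 : ℝ) ^ n * d n a b ≤ geomSum d hC a b :=
  (summable_geomSum_term d hC a b).le_tsum n fun j _ =>
    mul_nonneg (by positivity) ((d j).nonneg a b)

theorem geomSum_le (a b : X) : geomSum d hC a b ≤ 2 * C := by
  calc geomSum d hC a b ≤ ∑' n : ℕ, (1 / 2 : ℝ) ^ n * C :=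
        (summable_geomSum_term d hC a b).tsum_le_tsum
          (fun n => mul_le_mul_of_nonneg_left (hC n a b) (by positivity))
          (summable_geometric_two.mul_right C)
    _ = 2 * C := by rw [tsum_mul_right, tsum_geometric_two]

theorem geomSum_smul {G : Type*} [SMul G X] (hd : ∀ n (g : G) a b, d n (g • a) (g • b) = d n a b)
    (g : G) (a b : X) : geomSum d hC (g • a) (g • b) = geomSum d hC a b := by
  simp only [geomSum, PseudoMetric.coe_mk, hd]

theorem tendsto_geomSum {l : Filter X} {a : X} (hd : ∀ n, Tendsto (d n a) l (𝓝 0)) :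
    Tendsto (geomSum d hC a) l (𝓝 0) := by
  have := tendsto_tsum_of_dominated_convergence (f := fun b n => (1 / 2 : ℝ) ^ n * d n a b)
    (summable_geometric_two.mul_right C)
    (fun n => by simpa using (hd n).const_mul ((1 / 2 : ℝ) ^ n))
    (Eventually.of_forall fun b n => by
      rw [Real.norm_of_nonneg (mul_nonneg (by positivity) ((d n).nonneg a b))]
      exact mul_le_mul_of_nonneg_left (hC n a b) (by positivity))
  simp only [tsum_zero] at this
  exact this.congr fun b => (geomSum_apply hC a b).symm

end GeomSum

section Glue

variable {ι : Type*} [DecidableEq ι]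

def glue (s : X → ι) (d : ι → PseudoMetric X ℝ) {C : ℝ} (hC : ∀ i a b, d i a b ≤ 2 * C) :
    PseudoMetric X ℝ where
  toFun a b := if s a = s b then d (s a) a b else C
  refl' a := by simp
  symm' a b := by
    by_cases h : s a = s b
    · rw [if_pos h, if_pos h.symm, h, (d _).symm]
    · rw [if_neg h, if_neg (Ne.symm h)]
  triangle' a b c := by
    have hC₀ : 0 ≤ C := by linarith [(d (s a)).nonneg a a, hC (s a) a a]
    by_cases hab : s a = s b <;> by_cases hbc : s b = s c
    · rw [if_pos hab, if_pos hbc, if_pos (hab.trans hbc), ← hab]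
      exact (d _).triangle a b c
    · rw [if_pos hab, if_neg hbc, if_neg (hab ▸ hbc)]
      linarith [(d (s a)).nonneg a b]
    · rw [if_neg hab, if_pos hbc, if_neg (hbc ▸ hab)]
      linarith [(d (s b)).nonneg b c]
    · rw [if_neg hab, if_neg hbc]
      split_ifs
      · linarith [hC (s a) a c]
      · linarith

variable {s : X → ι} {d : ι → PseudoMetric X ℝ} {C : ℝ} (hC : ∀ i a b, d i a b ≤ 2 * C)
include hC

theorem glue_smul {G : Type*} [SMul G X] (hs : ∀ (g : G) a, s (g • a) = s a)
    (hd : ∀ i (g : G) a b, d i (g • a) (g • b) = d i a b) (g : G) (a b : X) :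
    glue s d hC (g • a) (g • b) = glue s d hC a b := by
  simp only [glue, PseudoMetric.coe_mk, hs, hd]

theorem hasBasis_glue [TopologicalSpace X] {a : X} (hC₀ : 0 < C) (hs : ∀ᶠ b in 𝓝 a, s b = s a)
    (hd : (𝓝 a).HasBasis (fun ε : ℝ => 0 < ε) fun ε => {b | d (s a) a b < ε}) :
    (𝓝 a).HasBasis (fun ε : ℝ => 0 < ε) fun ε => {b | glue s d hC a b < ε} := by
  refine hd.to_hasBasis' (fun ε hε => ⟨min ε C, lt_min hε hC₀, fun b hb => ?_⟩)
    fun ε hε => ?_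
  · have hab : s a = s b := by
      by_contra h
      have : glue s d hC a b = C := if_neg h
      linarith [min_le_right ε C, hb.out]
    have : glue s d hC a b = d (s a) a b := if_pos hab
    exact (this ▸ hb.out).trans_le (min_le_left _ _)
  · filter_upwards [hs, hd.mem_of_mem hε] with b hb hdb
    have : glue s d hC a b = d (s a) a b := if_pos hb.symm
    exact this ▸ hdb

end Glue

end PseudoMetric

end

section Basis

variable {X : Type*}

theorem hasBasis_nhds_of_tendsto_of_le [PseudoMetricSpace X] {a : X} {f : X → ℝ} {c t : ℝ}
    (hc : 0 < c) (ht : 0 < t) (hf : Tendsto f (𝓝 a) (𝓝 0))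
    (hle : ∀ b, c * min (dist a b) t ≤ f b) :
    (𝓝 a).HasBasis (fun ε : ℝ => 0 < ε) fun ε => {b | f b < ε} := by
  refine nhds_basis_ball.to_hasBasis' (fun r hr => ⟨c * min r t, by positivity, fun b hb => ?_⟩)
    fun ε hε => (tendsto_order.1 hf).2 ε hε
  rw [mem_ball, dist_comm]
  by_contra hrb
  have : c * min r t ≤ c * min (dist a b) t :=
    mul_le_mul_of_nonneg_left (min_le_min_right t (not_lt.1 hrb)) hc.le
  linarith [hle b, hb.out]

variable [TopologicalSpace X] {ρ : X → X → ℝ}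
  (h : ∀ a, (𝓝 a).HasBasis (fun ε : ℝ => 0 < ε) fun ε => {b | ρ a b < ε})
include h

theorem isOpen_iff_of_hasBasis (s : Set X) :
    IsOpen s ↔ ∀ a ∈ s, ∃ ε > 0, {b : X | ρ a b < ε} ⊆ s := by
  simp only [isOpen_iff_mem_nhds, (h _).mem_iff]

theorem eq_zero_iff_of_hasBasis [T1Space X] (hρ : ∀ a, ρ a a = 0) (a b : X) :
    ρ a b = 0 ↔ a = b := by
  refine ⟨fun hab => by_contra fun hne => ?_, fun hab => hab ▸ hρ a⟩
  obtain ⟨ε, hε, hsub⟩ := (h a).mem_iff.1 (compl_singleton_mem_nhds hne)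
  exact hsub (show ρ a b < ε from hab ▸ hε) rfl

end Basis

section BumpMetric

open PseudoMetric

variable {X : Type*} [MetricSpace X]

theorem IsBump.cutoffDist_le_two {θ : X → ℝ} (hθ : IsBump θ) (a b : X) : cutoffDist θ a b ≤ 2 :=
  (cutoffDist_le_abs_add_abs θ a b).trans (by linarith [hθ.abs_le_one a, hθ.abs_le_one b])

variable {G : Type*} [Group G] [MulAction G X]

variable (G) in
noncomputable def bumpMetric (θ : ℕ → X → ℝ) (hθ : ∀ n, IsBump (θ n)) : PseudoMetric X ℝ :=
  geomSum (fun n => smulSup G (cutoffDist (θ n)) (hθ n).cutoffDist_le_two)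
    fun _ => smulSup_le _

theorem bumpMetric_le {θ : ℕ → X → ℝ} (hθ : ∀ n, IsBump (θ n)) (a b : X) :
    bumpMetric G θ hθ a b ≤ 2 * 2 :=
  geomSum_le _ a b

theorem bumpMetric_smul {θ : ℕ → X → ℝ} (hθ : ∀ n, IsBump (θ n)) (g : G) (a b : X) :
    bumpMetric G θ hθ (g • a) (g • b) = bumpMetric G θ hθ a b :=
  geomSum_smul _ (fun _ => smulSup_smul _) g a b

variable [T2Space (Quotient (orbitRel G X))] [Countable G] [ContinuousConstSMul G X]
  [LocallyCompactSpace X] [LocallyConnectedSpace X]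

theorem IsBump.tendsto_smulSup_cutoffDist {θ : X → ℝ} (hθ : IsBump θ) (a : X) :
    Tendsto (smulSup G (cutoffDist θ) hθ.cutoffDist_le_two a) (𝓝 a) (𝓝 0) := by
  refine tendsto_order.2 ⟨fun ε hε => Eventually.of_forall fun b => hε.trans_le
    ((smulSup G _ _).nonneg a b), fun ε hε => ?_⟩
  by_contra hfreq
  obtain ⟨b, hb, hεb⟩ := exists_seq_forall_of_frequently (not_eventually.1 hfreq)
  have : ∀ k, ∃ g : G, ε / 2 < cutoffDist θ (g • a) (g • b k) := fun k =>
    exists_lt_of_lt_smulSup _ ((half_lt_self hε).trans_le (not_lt.1 (hεb k)))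
  choose g hg using this
  classical
  let y : ℕ → X := fun k => if θ (g k • a) = 0 then b k else a
  have hy : Tendsto y atTop (𝓝 a) := by
    refine tendsto_iff_dist_tendsto_zero.2 (squeeze_zero (fun _ => dist_nonneg) (fun k => ?_)
      (tendsto_iff_dist_tendsto_zero.1 hb))
    by_cases h : θ (g k • a) = 0 <;> simp [y, h]
  -- `θ` cannot vanish at both `g k • a` and `g k • b k`, since `cutoffDist θ` would vanish there
  have hsupp : ∀ k, g k • y k ∈ tsupport θ := by
    intro k
    refine subset_tsupport θ ?_
    by_cases h : θ (g k • a) = 0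
    · simp only [y, h, if_true]
      intro hb0
      have := cutoffDist_le_abs_add_abs θ (g k • a) (g k • b k)
      rw [h, hb0, abs_zero, add_zero] at this
      linarith [hg k]
    · simp [y, h]
  obtain ⟨w, -, φ, hφ, hw⟩ := hθ.hasCompactSupport.isCompact.tendsto_subseq hsupp
  have hyφ := hy.comp hφ.tendsto_atTop
  have hga := tendsto_smul_of_tendsto_smul hyφ tendsto_const_nhds hw
  have hgb := tendsto_smul_of_tendsto_smul hyφ (hb.comp hφ.tendsto_atTop) hw
  obtain ⟨m, hm⟩ :=
    ((tendsto_cutoffDist hθ.continuous hga hgb).eventually (gt_mem_nhds (half_pos hε))).exists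
  exact (hg (φ m)).not_gt hm

theorem hasBasis_bumpMetric {θ : ℕ → X → ℝ} (hθ : ∀ n, IsBump (θ n)) {a : X} (ha : ∃ n, θ n a ≠ 0) :
    (𝓝 a).HasBasis (fun ε : ℝ => 0 < ε) fun ε => {b | bumpMetric G θ hθ a b < ε} := by
  obtain ⟨n, hn⟩ := ha
  refine hasBasis_nhds_of_tendsto_of_le (by positivity : (0 : ℝ) < (1 / 2) ^ n) (abs_pos.2 hn)
    (tendsto_geomSum _ fun n => (hθ n).tendsto_smulSup_cutoffDist a) fun b => ?_
  calc (1 / 2 : ℝ) ^ n * min (dist a b) |θ n a|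
      ≤ (1 / 2) ^ n * smulSup G (cutoffDist (θ n)) (hθ n).cutoffDist_le_two a b :=
        mul_le_mul_of_nonneg_left ((min_dist_abs_le_cutoffDist _ a b).trans (le_smulSup _ a b))
          (by positivity)
    _ ≤ bumpMetric G θ hθ a b :=
        pow_mul_le_geomSum (d := fun n => smulSup G (cutoffDist (θ n)) (hθ n).cutoffDist_le_two)
          (fun _ => smulSup_le _) n a b

end BumpMetric

/-- A metrizable, locally compact and locally connected space with an action of a
countable group whose orbit space is Hausdorff admits an invariant metric inducing its
topology. -/
theorem stmt19 {G X : Type*} [Group G] [Countable G] [TopologicalSpace X]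
    [TopologicalSpace.MetrizableSpace X] [LocallyCompactSpace X]
    [LocallyConnectedSpace X] [MulAction G X] [ContinuousConstSMul G X]
    [T2Space (Quotient (MulAction.orbitRel G X))] :
    ∃ ρ : X → X → ℝ,
      (∀ a b : X, 0 ≤ ρ a b) ∧
      (∀ a b : X, ρ a b = 0 ↔ a = b) ∧
      (∀ a b : X, ρ a b = ρ b a) ∧
      (∀ a b c : X, ρ a c ≤ ρ a b + ρ b c) ∧
      (∀ (g : G) (a b : X), ρ (g • a) (g • b) = ρ a b) ∧
      (∀ s : Set X, IsOpen s ↔ ∀ a ∈ s, ∃ ε > 0, {b : X | ρ a b < ε} ⊆ s) := by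
  let _ : MetricSpace X := TopologicalSpace.metrizableSpaceMetric X
  classical
  obtain ⟨θ, hθ, hcov⟩ := exists_isBump_families (X := X)
  let ρ := PseudoMetric.glue (sector G) (fun t => bumpMetric G (θ t) (hθ t)) (C := 2)
    fun t => bumpMetric_le (hθ t)
  have hbasis : ∀ a, (𝓝 a).HasBasis (fun ε : ℝ => 0 < ε) fun ε => {b | ρ a b < ε} := fun a =>
    PseudoMetric.hasBasis_glue _ two_pos (eventually_sector_eq a) <| hasBasis_bumpMetric (hθ _)
      (hcov _ (isSigmaCompact_sector a) a (mem_sector_self a))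
  exact ⟨ρ, ρ.nonneg, eq_zero_iff_of_hasBasis hbasis ρ.refl, ρ.symm, ρ.triangle,
    PseudoMetric.glue_smul _ sector_smul fun t => bumpMetric_smul (hθ t),
    isOpen_iff_of_hasBasis hbasis⟩
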